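/- arXiv:0806.0604 — 2 statements merged into one kernel-verified Lean document; each statement's English description precedes it below -/
import Mathlib

section
/- Let X be a random n×p matrix with i.i.d. entries of mean 0 and variance 1, and let Ỹ = X_{j*}·β_min + W where j* is uniform over {1,...,p−k+1} and W ~ N(0,I_n) independent. Then the expectation over X of the conditional covariance matrix of Ỹ given X equals (1 + β_min²·(1 − 1/(p−k+1)))·I_n. -/
open Real MeasureTheory ProbabilityTheory Finset

/-- Standard Gaussian measure on ℝⁿ (i.i.d. N(0,1) coordinates), the law of W. -/
noncomputable def stdGaussVec (n : ℕ) : Measure (Fin n → ℝ) :=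
  Measure.pi fun _ => gaussianReal 0 1

/-- The modified observation Ỹ = X_{j*} βmin + W. -/
noncomputable def obsYtil {n p : ℕ} (βmin : ℝ) (x : Fin n → Fin p → ℝ)
    (jstar : Fin p) (w : Fin n → ℝ) (i : Fin n) : ℝ :=
  x i jstar * βmin + w i

/-- Expectation over j* uniform on {1,…,p-k+1} and the Gaussian noise W;
here j* ranges over the first p-k+1 columns. -/
noncomputable def expJW (n p k : ℕ) (h : p - k + 1 ≤ p)
    (f : Fin p → (Fin n → ℝ) → ℝ) : ℝ :=
  ((p - k + 1 : ℕ) : ℝ)⁻¹ *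
    ∑ j : Fin (p - k + 1), ∫ w, f (Fin.castLE h j) w ∂stdGaussVec n

/-- Conditional covariance matrix Λ(x) of Ỹ given X = x (randomness over j* and W). -/
noncomputable def condCovTil (n p k : ℕ) (h : p - k + 1 ≤ p) (βmin : ℝ)
    (x : Fin n → Fin p → ℝ) (i j : Fin n) : ℝ :=
  expJW n p k h (fun js w => obsYtil βmin x js w i * obsYtil βmin x js w j) -
    expJW n p k h (fun js w => obsYtil βmin x js w i) *
      expJW n p k h (fun js w => obsYtil βmin x js w j)

lemma gauss_pdf_eq (x : ℝ) :
    gaussianPDFReal 0 1 x = (√(2 * π))⁻¹ * rexp (-(1/2) * x ^ 2) := by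
  simp [gaussianPDFReal]
  ring_nf
  exact Or.inl trivial

lemma gauss_integral_eq (f : ℝ → ℝ) :
    ∫ x, f x ∂(gaussianReal 0 1) = ∫ x, gaussianPDFReal 0 1 x * f x := by
  rw [gaussianReal_of_var_ne_zero 0 one_ne_zero]
  have h1 : gaussianPDF 0 1 = fun x => ((gaussianPDFReal 0 1 x).toNNReal : ENNReal) := by
    ext x; simp [gaussianPDF, ENNReal.ofReal]
  rw [h1, integral_withDensity_eq_integral_smul
    (measurable_gaussianPDFReal 0 1).real_toNNReal]
  congr 1; ext x
  simp [NNReal.smul_def, Real.coe_toNNReal _ (gaussianPDFReal_nonneg 0 1 x)]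

lemma gauss_integrable_iff (f : ℝ → ℝ) :
    Integrable f (gaussianReal 0 1) ↔
      Integrable (fun x => gaussianPDFReal 0 1 x * f x) volume := by
  rw [gaussianReal_of_var_ne_zero 0 one_ne_zero]
  have h1 : gaussianPDF 0 1 = fun x => ((gaussianPDFReal 0 1 x).toNNReal : ENNReal) := by
    ext x; simp [gaussianPDF, ENNReal.ofReal]
  rw [h1, integrable_withDensity_iff_integrable_smul
    (measurable_gaussianPDFReal 0 1).real_toNNReal]
  constructor <;> intro h <;> refine h.congr (Filter.Eventually.of_forall fun x => ?_) <;>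
    simp [NNReal.smul_def, Real.coe_toNNReal _ (gaussianPDFReal_nonneg 0 1 x)]

lemma integrable_id_gauss : Integrable (fun x : ℝ => x) (gaussianReal 0 1) := by
  rw [gauss_integrable_iff]
  have h := (integrable_mul_exp_neg_mul_sq (b := 1/2) (by norm_num)).const_mul (√(2 * π))⁻¹
  refine h.congr (Filter.Eventually.of_forall fun x => ?_)
  simp only [gauss_pdf_eq]; ring

lemma integrable_sq_gauss : Integrable (fun x : ℝ => x ^ 2) (gaussianReal 0 1) := by
  rw [gauss_integrable_iff]
  have h0 : Integrable (fun x : ℝ => x ^ 2 * rexp (-(1/2) * x ^ 2)) volume := by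
    have := integrable_rpow_mul_exp_neg_mul_sq (b := 1/2) (by norm_num) (s := 2) (by norm_num)
    have h2 : ∀ x : ℝ, x ^ (2:ℝ) = x ^ (2:ℕ) := fun x => by
      rw [← Real.rpow_natCast x 2]; norm_num
    refine this.congr (Filter.Eventually.of_forall fun x => ?_)
    simp only [h2]
  refine (h0.const_mul (√(2 * π))⁻¹).congr (Filter.Eventually.of_forall fun x => ?_)
  simp only [gauss_pdf_eq]; ring

lemma integral_id_gauss : ∫ x, x ∂(gaussianReal 0 1) = 0 := by
  rw [gauss_integral_eq]
  have h1 : ∫ x : ℝ, gaussianPDFReal 0 1 (-x) * (-x) = ∫ x : ℝ, gaussianPDFReal 0 1 x * x :=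
    integral_neg_eq_self (fun x : ℝ => gaussianPDFReal 0 1 x * x) volume
  have h2 : ∀ x : ℝ, gaussianPDFReal 0 1 (-x) * (-x) = -(gaussianPDFReal 0 1 x * x) := by
    intro x; simp only [gauss_pdf_eq]; ring_nf
  simp_rw [h2, integral_neg] at h1
  linarith

lemma integral_sq_gauss : ∫ x, x ^ 2 ∂(gaussianReal 0 1) = 1 := by
  rw [gauss_integral_eq]
  have hint : Integrable (fun x : ℝ => x ^ 2 * rexp (-(1/2) * x ^ 2)) volume := by
    have := integrable_rpow_mul_exp_neg_mul_sq (b := 1/2) (by norm_num) (s := 2) (by norm_num)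
    have h2 : ∀ x : ℝ, x ^ (2:ℝ) = x ^ (2:ℕ) := fun x => by
      rw [← Real.rpow_natCast x 2]; norm_num
    refine this.congr (Filter.Eventually.of_forall fun x => ?_)
    simp only [h2]
  have key : ∫ x : ℝ, x ^ 2 * rexp (-(1/2) * x ^ 2) = √(2 * π) := by
    have hsplit : ∫ x : ℝ, x ^ 2 * rexp (-(1/2) * x ^ 2)
        = (∫ x in Set.Iic (0:ℝ), x ^ 2 * rexp (-(1/2) * x ^ 2))
          + ∫ x in Set.Ioi (0:ℝ), x ^ 2 * rexp (-(1/2) * x ^ 2) := by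
      rw [← integral_add_compl (measurableSet_Iic (a := (0:ℝ))) hint, Set.compl_Iic]
    have heven : (∫ x in Set.Iic (0:ℝ), x ^ 2 * rexp (-(1/2) * x ^ 2))
        = ∫ x in Set.Ioi (0:ℝ), x ^ 2 * rexp (-(1/2) * x ^ 2) := by
      rw [← neg_zero, ← integral_comp_neg_Ioi]
      simp
    have hIoi : ∫ x in Set.Ioi (0:ℝ), x ^ 2 * rexp (-(1/2) * x ^ 2)
        = √(2 * π) / 2 := by
      have h := integral_rpow_mul_exp_neg_mul_rpow (p := 2) (q := 2) (b := 1/2)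
        (by norm_num) (by norm_num) (by norm_num)
      rw [show ∫ x in Set.Ioi (0:ℝ), x ^ 2 * rexp (-(1/2) * x ^ 2)
          = ∫ x in Set.Ioi (0:ℝ), x ^ (2:ℝ) * rexp (-(1/2) * x ^ (2:ℝ)) by
        refine setIntegral_congr_fun measurableSet_Ioi fun x _ => ?_
        rw [show ((2:ℝ)) = ((2:ℕ):ℝ) by norm_num, rpow_natCast], h]
      have hG : Real.Gamma ((2 + 1) / 2) = √π / 2 := by
        rw [show ((2:ℝ) + 1)/2 = 1/2 + 1 by norm_num, Real.Gamma_add_one (by norm_num),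
          Real.Gamma_one_half_eq]
        ring
      rw [hG]
      rw [show (-((2:ℝ)+1)/2 : ℝ) = -(3/2) by norm_num]
      rw [show ((1:ℝ)/2) ^ (-(3/2) : ℝ) = 2 ^ ((3/2) : ℝ) by
        rw [show ((1:ℝ)/2) = 2⁻¹ by norm_num, Real.inv_rpow (by norm_num),
          ← Real.rpow_neg (by norm_num), neg_neg]]
      rw [show ((2:ℝ)) ^ ((3/2) : ℝ) = 2 * √2 by
        rw [show ((3:ℝ)/2) = 1 + 1/2 by norm_num, Real.rpow_add (by norm_num), Real.rpow_one,
          Real.sqrt_eq_rpow]]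
      rw [Real.sqrt_mul (by norm_num)]
      ring
    rw [hsplit, heven, hIoi]; ring
  calc ∫ x : ℝ, gaussianPDFReal 0 1 x * x ^ 2
      = (√(2 * π))⁻¹ * ∫ x : ℝ, x ^ 2 * rexp (-(1/2) * x ^ 2) := by
        rw [← integral_const_mul]
        congr 1; ext x; rw [gauss_pdf_eq]; ring
    _ = 1 := by
        rw [key, inv_mul_cancel₀]
        positivity

lemma pi_integral_prod {n : ℕ} (μ0 : Measure ℝ) [SigmaFinite μ0] (u : Fin n → ℝ → ℝ) :
    ∫ w, ∏ l, u l (w l) ∂(Measure.pi fun _ : Fin n => μ0) = ∏ l, ∫ x, u l x ∂μ0 := by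
  letI : MeasureSpace ℝ := ⟨μ0⟩
  exact MeasureTheory.integral_fintype_prod_eq_prod u

lemma pi_integrable_prod {n : ℕ} (μ0 : Measure ℝ) [SigmaFinite μ0] (u : Fin n → ℝ → ℝ)
    (hu : ∀ l, Integrable (u l) μ0) :
    Integrable (fun w => ∏ l, u l (w l)) (Measure.pi fun _ : Fin n => μ0) := by
  letI : MeasureSpace ℝ := ⟨μ0⟩
  exact MeasureTheory.Integrable.fintype_prod hu

instance (n : ℕ) : IsProbabilityMeasure (stdGaussVec n) :=
  Measure.pi.instIsProbabilityMeasure _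

section evals
variable {n : ℕ} (i j : Fin n)

private noncomputable def u1 (i : Fin n) : Fin n → ℝ → ℝ :=
  fun l => if l = i then (fun x => x) else fun _ => 1

lemma u1_prod (w : Fin n → ℝ) : ∏ l, u1 i l (w l) = w i := by
  refine Fintype.prod_eq_single i (fun l hl => ?_) |>.trans (by simp [u1])
  simp [u1, hl]

lemma gauss_vec_eval_int : Integrable (fun w => w i) (stdGaussVec n) := by
  have := pi_integrable_prod (gaussianReal 0 1) (u1 i) (fun l => by
    by_cases hl : l = i <;> simp [u1, hl, integrable_id_gauss])
  refine this.congr (Filter.Eventually.of_forall fun w => u1_prod i w)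

lemma gauss_vec_eval : ∫ w, w i ∂(stdGaussVec n) = 0 := by
  have h : ∫ w, w i ∂(stdGaussVec n) = ∫ w, ∏ l, u1 i l (w l) ∂(stdGaussVec n) := by
    congr 1; ext w; rw [u1_prod]
  rw [h, stdGaussVec, pi_integral_prod]
  refine (Fintype.prod_eq_single i (fun l hl => ?_)).trans (by simp [u1, integral_id_gauss])
  simp [u1, hl]

private noncomputable def u2 (i j : Fin n) : Fin n → ℝ → ℝ :=
  fun l => if l = i then (fun x => x) else if l = j then (fun x => x) else fun _ => 1

lemma u2_prod (hij : i ≠ j) (w : Fin n → ℝ) : ∏ l, u2 i j l (w l) = w i * w j := by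
  refine (Fintype.prod_eq_mul i j hij (fun l hl => ?_)).trans (by simp [u2, hij])
  simp [u2, hl.1, hl.2]

lemma gauss_vec_mul_int : Integrable (fun w => w i * w j) (stdGaussVec n) := by
  by_cases hij : i = j
  · subst hij
    have := pi_integrable_prod (gaussianReal 0 1)
      (fun l => if l = i then (fun x => x ^ 2) else fun _ => 1) (fun l => by
        by_cases hl : l = i <;> simp [hl, integrable_sq_gauss])
    refine this.congr (Filter.Eventually.of_forall fun w => ?_)
    refine (Fintype.prod_eq_single i (fun l hl => by simp [hl])).trans (by simp; ring)
  · have := pi_integrable_prod (gaussianReal 0 1) (u2 i j) (fun l => by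
      by_cases hl : l = i
      · simp [u2, hl, integrable_id_gauss]
      · by_cases hl2 : l = j <;> simp [u2, hl, hl2, integrable_id_gauss])
    refine this.congr (Filter.Eventually.of_forall fun w => u2_prod i j hij w)

lemma gauss_vec_mul : ∫ w, w i * w j ∂(stdGaussVec n) = if i = j then 1 else 0 := by
  by_cases hij : i = j
  · subst hij; simp only [if_pos rfl]
    have h : ∫ w, w i * w i ∂(stdGaussVec n)
        = ∫ w, ∏ l, (if l = i then (fun x : ℝ => x ^ 2) else fun _ => 1) (w l)
            ∂(stdGaussVec n) := by
      congr 1; ext w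
      rw [Fintype.prod_eq_single i (fun l hl => by simp [hl])]
      simp; ring
    rw [h, stdGaussVec, pi_integral_prod]
    refine (Fintype.prod_eq_single i (fun l hl => by simp [hl])).trans
      (by simp [integral_sq_gauss])
  · simp only [if_neg hij]
    have h : ∫ w, w i * w j ∂(stdGaussVec n)
        = ∫ w, ∏ l, u2 i j l (w l) ∂(stdGaussVec n) := by
      congr 1; ext w; rw [u2_prod i j hij]
    rw [h, stdGaussVec, pi_integral_prod]
    refine (Fintype.prod_eq_mul i j hij (fun l hl => ?_)).trans ?_
    · simp [u2, hl.1, hl.2]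
    · simp [u2, hij, integral_id_gauss]
end evals

lemma int_shift {n : ℕ} (a : ℝ) (i : Fin n) :
    ∫ w, (a + w i) ∂(stdGaussVec n) = a := by
  rw [integral_add (integrable_const a) (gauss_vec_eval_int i), gauss_vec_eval,
    integral_const]
  simp

lemma int_shift_mul {n : ℕ} (a b : ℝ) (i j : Fin n) :
    ∫ w, (a + w i) * (b + w j) ∂(stdGaussVec n)
      = a * b + (if i = j then 1 else 0) := by
  have hrw : ∀ w : Fin n → ℝ,
      (a + w i) * (b + w j) = a * b + (a * w j + b * w i + w i * w j) := by
    intro w; ring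
  have hB : Integrable (fun w : Fin n → ℝ => a * w j) (stdGaussVec n) :=
    (gauss_vec_eval_int j).const_mul a
  have hC : Integrable (fun w : Fin n → ℝ => b * w i) (stdGaussVec n) :=
    (gauss_vec_eval_int i).const_mul b
  have hA : Integrable (fun w : Fin n → ℝ => a * w j + b * w i) (stdGaussVec n) := hB.add hC
  have hint : Integrable (fun w : Fin n → ℝ => a * w j + b * w i + w i * w j) (stdGaussVec n) :=
    hA.add (gauss_vec_mul_int i j)
  calc ∫ w, (a + w i) * (b + w j) ∂(stdGaussVec n)
      = ∫ w, (a * b + (a * w j + b * w i + w i * w j)) ∂(stdGaussVec n) := by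
        simp_rw [hrw]
    _ = a * b + (if i = j then 1 else 0) := by
        rw [integral_add (integrable_const _) hint, integral_const,
          integral_add hA (gauss_vec_mul_int i j), integral_add hB hC,
          integral_const_mul, integral_const_mul, gauss_vec_eval, gauss_vec_eval,
          gauss_vec_mul]
        simp

lemma condCovTil_eq (n p k : ℕ) (h : p - k + 1 ≤ p) (βmin : ℝ)
    (x : Fin n → Fin p → ℝ) (i j : Fin n) :
    condCovTil n p k h βmin x i j
      = (if i = j then 1 else 0)
        + βmin ^ 2 * ((((p - k + 1 : ℕ) : ℝ)⁻¹ *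
            ∑ a : Fin (p - k + 1), x i (Fin.castLE h a) * x j (Fin.castLE h a))
          - (((p - k + 1 : ℕ) : ℝ)⁻¹ * ∑ a : Fin (p - k + 1), x i (Fin.castLE h a))
            * (((p - k + 1 : ℕ) : ℝ)⁻¹ * ∑ a : Fin (p - k + 1), x j (Fin.castLE h a))) := by
  have hm : ((p - k + 1 : ℕ) : ℝ) ≠ 0 := by positivity
  unfold condCovTil expJW obsYtil
  have e1 : ∀ js : Fin p, ∫ w, (x i js * βmin + w i) ∂(stdGaussVec n) = x i js * βmin :=
    fun js => int_shift _ i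
  have e1' : ∀ js : Fin p, ∫ w, (x j js * βmin + w j) ∂(stdGaussVec n) = x j js * βmin :=
    fun js => int_shift _ j
  have e2 : ∀ js : Fin p,
      ∫ w, (x i js * βmin + w i) * (x j js * βmin + w j) ∂(stdGaussVec n)
        = (x i js * βmin) * (x j js * βmin) + (if i = j then 1 else 0) :=
    fun js => int_shift_mul _ _ i j
  simp_rw [e1, e1', e2]
  have key : ∀ (js : Fin p), x i js * βmin * (x j js * βmin)
      = βmin ^ 2 * (x i js * x j js) := fun js => by ring
  simp_rw [key]
  rw [Finset.sum_add_distrib, ← Finset.mul_sum, Finset.sum_const, nsmul_eq_mul,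
    Finset.card_univ, Fintype.card_fin, ← Finset.sum_mul, ← Finset.sum_mul]
  have hc : ((p - k + 1 : ℕ) : ℝ)⁻¹ * ((p - k + 1 : ℕ) : ℝ) = 1 := inv_mul_cancel₀ hm
  linear_combination (if i = j then (1:ℝ) else 0) * hc

theorem avg_cond_cov_restrictedB {Ω : Type*} [MeasurableSpace Ω]
    (P : Measure Ω) [IsProbabilityMeasure P]
    (n p k : ℕ) (hk : 1 ≤ k) (hkp : k ≤ p) (h : p - k + 1 ≤ p) (βmin : ℝ)
    (X : Fin n × Fin p → Ω → ℝ)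
    (hmeas : ∀ ij, Measurable (X ij))
    -- the entries are independent...
    (hindep : iIndepFun X P)
    -- ...and identically distributed with mean 0 and variance 1:
    (μ : Measure ℝ) (hid : ∀ ij, P.map (X ij) = μ)
    (hmean : ∫ x, x ∂μ = 0) (hvar : ∫ x, x ^ 2 ∂μ = 1) :
    ∀ i j : Fin n,
      ∫ ω, condCovTil n p k h βmin (fun i' j' => X (i', j') ω) i j ∂P
        = (1 + βmin ^ 2 * (1 - 1 / ((p : ℝ) - k + 1))) *
            (if i = j then 1 else 0) := by
  intro i j
  have hp0 : 0 < p := lt_of_lt_of_le hk hkp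
  -- μ is a probability measure
  have hμprob : IsProbabilityMeasure μ := by
    rw [← hid (i, ⟨0, hp0⟩)]
    exact Measure.isProbabilityMeasure_map (hmeas _).aemeasurable
  -- integrability of moments of μ
  have hμsq : Integrable (fun x : ℝ => x ^ 2) μ := by
    by_contra hcon
    rw [integral_undef hcon] at hvar
    norm_num at hvar
  have hμid : Integrable (fun x : ℝ => x) μ := by
    refine Integrable.mono' ((integrable_const (1:ℝ)).add hμsq)
      aestronglyMeasurable_id (Filter.Eventually.of_forall fun x => ?_)
    simp only [Pi.add_apply]
    rw [Real.norm_eq_abs]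
    nlinarith [sq_nonneg (|x| - 1), sq_abs x, abs_nonneg x]
  have hμmul : Integrable (fun x : ℝ => x * x) μ := by
    refine hμsq.congr (Filter.Eventually.of_forall fun x => ?_)
    ring
  have hmm : AEStronglyMeasurable (fun x : ℝ => x * x) (P.map (X (i, ⟨0, hp0⟩))) :=
    (measurable_id.mul measurable_id).aestronglyMeasurable
  -- single-variable facts over P
  have hXint : ∀ a, Integrable (X a) P := by
    intro a
    have h1 : Integrable (fun x : ℝ => x) (P.map (X a)) := by rw [hid a]; exact hμid
    exact (integrable_map_measure aestronglyMeasurable_id (hmeas a).aemeasurable).mp h1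
  have hXE : ∀ a, ∫ ω, X a ω ∂P = 0 := by
    intro a
    have h1 := integral_map (μ := P) (hmeas a).aemeasurable
      (f := fun x : ℝ => x) aestronglyMeasurable_id
    rw [hid a] at h1
    rw [← h1, hmean]
  -- product facts
  have prodInt : ∀ a b, Integrable (fun ω => X a ω * X b ω) P := by
    intro a b
    by_cases hab : a = b
    · subst hab
      have h1 : Integrable (fun x : ℝ => x * x) (P.map (X a)) := by rw [hid a]; exact hμmul
      exact (integrable_map_measure
        (measurable_id.mul measurable_id).aestronglyMeasurable (hmeas a).aemeasurable).mp h1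
    · exact (hindep.indepFun hab).integrable_mul (hXint a) (hXint b)
  have prodE : ∀ a b, ∫ ω, X a ω * X b ω ∂P = if a = b then 1 else 0 := by
    intro a b
    by_cases hab : a = b
    · subst hab
      simp only [if_pos rfl]
      have h1 := integral_map (μ := P) (hmeas a).aemeasurable
        (f := fun x : ℝ => x * x)
        (measurable_id.mul measurable_id).aestronglyMeasurable
      rw [hid a] at h1
      rw [← h1, ← hvar]
      congr 1; ext x; ring
    · simp only [if_neg hab]
      have := (hindep.indepFun hab).integral_mul_eq_mul_integral (hXint a).1 (hXint b).1
      have h2 : ∫ ω, X a ω * X b ω ∂P = ∫ ω, (X a * X b) ω ∂P := rfl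
      rw [h2, this, hXE, hXE, mul_zero]
  -- abbreviations
  have hmpos : ((p - k + 1 : ℕ) : ℝ) ≠ 0 := by positivity
  have hfun : ∀ ω, condCovTil n p k h βmin (fun i' j' => X (i', j') ω) i j
      = (if i = j then (1:ℝ) else 0)
        + (βmin ^ 2 * ((p - k + 1 : ℕ) : ℝ)⁻¹ *
            (∑ a : Fin (p - k + 1), X (i, Fin.castLE h a) ω * X (j, Fin.castLE h a) ω)
          - βmin ^ 2 * (((p - k + 1 : ℕ) : ℝ)⁻¹) ^ 2 *
            (∑ a : Fin (p - k + 1), ∑ b : Fin (p - k + 1),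
              X (i, Fin.castLE h a) ω * X (j, Fin.castLE h b) ω)) := by
    intro ω
    rw [condCovTil_eq]
    have h2 : (∑ a : Fin (p - k + 1), X (i, Fin.castLE h a) ω)
        * (∑ b : Fin (p - k + 1), X (j, Fin.castLE h b) ω)
        = ∑ a : Fin (p - k + 1), ∑ b : Fin (p - k + 1),
            X (i, Fin.castLE h a) ω * X (j, Fin.castLE h b) ω :=
      Finset.sum_mul_sum _ _ _ _
    rw [← h2]
    ring
  have hS1int : Integrable (fun ω => ∑ a : Fin (p - k + 1),
      X (i, Fin.castLE h a) ω * X (j, Fin.castLE h a) ω) P :=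
    integrable_finset_sum _ fun a _ => prodInt _ _
  have hDint : Integrable (fun ω => ∑ a : Fin (p - k + 1), ∑ b : Fin (p - k + 1),
      X (i, Fin.castLE h a) ω * X (j, Fin.castLE h b) ω) P :=
    integrable_finset_sum _ fun a _ => integrable_finset_sum _ fun b _ => prodInt _ _
  have hS1E : ∫ ω, ∑ a : Fin (p - k + 1),
      X (i, Fin.castLE h a) ω * X (j, Fin.castLE h a) ω ∂P
      = if i = j then ((p - k + 1 : ℕ) : ℝ) else 0 := by
    rw [integral_finset_sum _ fun a _ => prodInt _ _]
    simp_rw [prodE]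
    by_cases hij : i = j
    · subst hij; simp
    · simp [hij, Prod.ext_iff]
  have hDE : ∫ ω, ∑ a : Fin (p - k + 1), ∑ b : Fin (p - k + 1),
      X (i, Fin.castLE h a) ω * X (j, Fin.castLE h b) ω ∂P
      = if i = j then ((p - k + 1 : ℕ) : ℝ) else 0 := by
    rw [integral_finset_sum _ fun a _ => integrable_finset_sum _ fun b _ => prodInt _ _]
    have hin : ∀ a : Fin (p - k + 1),
        ∫ ω, ∑ b : Fin (p - k + 1), X (i, Fin.castLE h a) ω * X (j, Fin.castLE h b) ω ∂P
        = ∑ b : Fin (p - k + 1), ∫ ω, X (i, Fin.castLE h a) ω * X (j, Fin.castLE h b) ω ∂P :=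
      fun a => integral_finset_sum _ fun b _ => prodInt _ _
    simp_rw [hin, prodE]
    by_cases hij : i = j
    · subst hij
      simp [Prod.ext_iff, Fin.castLE_inj]
    · simp [hij, Prod.ext_iff]
  have hT1 : Integrable (fun ω => βmin ^ 2 * ((p - k + 1 : ℕ) : ℝ)⁻¹ *
      (∑ a : Fin (p - k + 1), X (i, Fin.castLE h a) ω * X (j, Fin.castLE h a) ω)) P :=
    hS1int.const_mul _
  have hT2 : Integrable (fun ω => βmin ^ 2 * (((p - k + 1 : ℕ) : ℝ)⁻¹) ^ 2 *
      (∑ a : Fin (p - k + 1), ∑ b : Fin (p - k + 1),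
        X (i, Fin.castLE h a) ω * X (j, Fin.castLE h b) ω)) P :=
    hDint.const_mul _
  have hT12 : Integrable (fun ω => βmin ^ 2 * ((p - k + 1 : ℕ) : ℝ)⁻¹ *
      (∑ a : Fin (p - k + 1), X (i, Fin.castLE h a) ω * X (j, Fin.castLE h a) ω)
      - βmin ^ 2 * (((p - k + 1 : ℕ) : ℝ)⁻¹) ^ 2 *
      (∑ a : Fin (p - k + 1), ∑ b : Fin (p - k + 1),
        X (i, Fin.castLE h a) ω * X (j, Fin.castLE h b) ω)) P := hT1.sub hT2
  rw [integral_congr_ae (Filter.Eventually.of_forall hfun),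
    integral_add (integrable_const _) hT12, integral_sub hT1 hT2,
    integral_const_mul, integral_const_mul, integral_const, hS1E, hDE]
  have hcast : ((p - k + 1 : ℕ) : ℝ) = (p : ℝ) - k + 1 := by
    push_cast [Nat.cast_sub hkp]
    ring
  by_cases hij : i = j
  · simp only [if_pos hij, measure_univ, probReal_univ, ENNReal.toReal_one, smul_eq_mul, mul_one, one_smul]
    rw [← hcast]
    have h1 : ((p - k + 1 : ℕ) : ℝ)⁻¹ * ((p - k + 1 : ℕ) : ℝ) = 1 := inv_mul_cancel₀ hmpos
    linear_combination (βmin ^ 2 - βmin ^ 2 * ((p - k + 1 : ℕ) : ℝ)⁻¹) * h1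
  · simp [hij]
end

section
/- Let L ~ Binomial(k, γ) and E := E_L[(1/2)·log(1 + L·β_min²/γ)] with β_min > 0. If γk ≤ 1, then (1/4)·γk·log(1 + β_min²/γ) ≤ E ≤ (1/2)·γk·log(1 + β_min²/γ). -/
open Real Finset

lemma binom_pmf_sum (k : ℕ) (γ : ℝ) :
    ∑ l ∈ Finset.range (k + 1),
      (Nat.choose k l : ℝ) * γ ^ l * (1 - γ) ^ (k - l) = 1 := by
  calc ∑ l ∈ Finset.range (k + 1),
        (Nat.choose k l : ℝ) * γ ^ l * (1 - γ) ^ (k - l)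
      = ∑ l ∈ Finset.range (k + 1), γ ^ l * (1 - γ) ^ (k - l) * (Nat.choose k l : ℝ) :=
        Finset.sum_congr rfl (fun l _ => by ring)
    _ = (γ + (1 - γ)) ^ k := (add_pow γ (1 - γ) k).symm
    _ = 1 := by norm_num

lemma binom_mean (k : ℕ) (γ : ℝ) :
    ∑ l ∈ Finset.range (k + 1),
      (l : ℝ) * ((Nat.choose k l : ℝ) * γ ^ l * (1 - γ) ^ (k - l)) = k * γ := by
  cases k with
  | zero => simp
  | succ m =>
    rw [Finset.sum_range_succ']
    simp only [Nat.cast_zero, zero_mul, add_zero]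
    have key : ∀ j ∈ Finset.range (m + 1),
        ((j + 1 : ℕ) : ℝ) * ((Nat.choose (m + 1) (j + 1) : ℝ) * γ ^ (j + 1) *
          (1 - γ) ^ (m + 1 - (j + 1))) =
        ((m + 1 : ℝ) * γ) * ((Nat.choose m j : ℝ) * γ ^ j * (1 - γ) ^ (m - j)) := by
      intro j _
      have hc : (m + 1) * Nat.choose m j = Nat.choose (m + 1) (j + 1) * (j + 1) :=
        Nat.add_one_mul_choose_eq m j
      have hc' : ((m : ℝ) + 1) * (Nat.choose m j : ℝ)
          = (Nat.choose (m + 1) (j + 1) : ℝ) * ((j : ℝ) + 1) := by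
        exact_mod_cast congrArg (Nat.cast (R := ℝ)) hc
      have hsub : m + 1 - (j + 1) = m - j := by omega
      rw [hsub]
      push_cast
      linear_combination (-(γ ^ (j + 1) * (1 - γ) ^ (m - j))) * hc'
    rw [Finset.sum_congr rfl key, ← Finset.mul_sum, binom_pmf_sum m γ]
    push_cast
    ring

theorem binomial_log_expectation_small (k : ℕ) (γ βmin : ℝ)
    (hk : 1 ≤ k) (hγ0 : 0 < γ) (hγ1 : γ ≤ 1) (hβ : 0 < βmin)
    (hsmall : γ * k ≤ 1) :
    (1 / 4) * (γ * k) * Real.log (1 + βmin ^ 2 / γ) ≤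
      (∑ l ∈ Finset.range (k + 1),
        (Nat.choose k l : ℝ) * γ ^ l * (1 - γ) ^ (k - l) *
          ((1 / 2) * Real.log (1 + (l : ℝ) * βmin ^ 2 / γ))) ∧
    (∑ l ∈ Finset.range (k + 1),
        (Nat.choose k l : ℝ) * γ ^ l * (1 - γ) ^ (k - l) *
          ((1 / 2) * Real.log (1 + (l : ℝ) * βmin ^ 2 / γ)))
      ≤ (1 / 2) * (γ * k) * Real.log (1 + βmin ^ 2 / γ) := by
  set x : ℝ := βmin ^ 2 / γ with hx
  have hx0 : 0 < x := div_pos (pow_pos hβ 2) hγ0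
  set c : ℝ := Real.log (1 + x) with hcdef
  have hc0 : 0 < c := Real.log_pos (by linarith)
  have hG : ∀ l : ℕ, (l : ℝ) * βmin ^ 2 / γ = (l : ℝ) * x := fun l => by
    rw [hx]; ring
  simp only [hG]
  have hp : ∀ l, 0 ≤ (Nat.choose k l : ℝ) * γ ^ l * (1 - γ) ^ (k - l) := by
    intro l
    have : (0:ℝ) ≤ 1 - γ := by linarith
    positivity
  constructor
  · -- lower bound
    have hstep : ∀ l ∈ Finset.range (k + 1),
        (Nat.choose k l : ℝ) * γ ^ l * (1 - γ) ^ (k - l) *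
          ((1 / 2) * (if l = 0 then 0 else c)) ≤
        (Nat.choose k l : ℝ) * γ ^ l * (1 - γ) ^ (k - l) *
          ((1 / 2) * Real.log (1 + (l : ℝ) * x)) := by
      intro l _
      apply mul_le_mul_of_nonneg_left _ (hp l)
      apply mul_le_mul_of_nonneg_left _ (by norm_num)
      by_cases h0 : l = 0
      · simp [h0]
      · simp only [h0, if_false]
        apply Real.log_le_log (by linarith)
        have hl1 : (1 : ℝ) ≤ (l : ℝ) := by exact_mod_cast Nat.one_le_iff_ne_zero.mpr h0
        nlinarith
    have hsum : ∑ l ∈ Finset.range (k + 1),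
        (Nat.choose k l : ℝ) * γ ^ l * (1 - γ) ^ (k - l) *
          ((1 / 2) * (if l = 0 then 0 else c)) =
        (1 / 2) * c * (1 - (1 - γ) ^ k) := by
      have hsplit : ∑ l ∈ Finset.range (k + 1),
          (Nat.choose k l : ℝ) * γ ^ l * (1 - γ) ^ (k - l) *
            ((1 / 2) * (if l = 0 then 0 else c)) =
          (1 / 2) * c * ∑ l ∈ Finset.range (k + 1),
            ((Nat.choose k l : ℝ) * γ ^ l * (1 - γ) ^ (k - l)
              - (if l = 0 then (Nat.choose k l : ℝ) * γ ^ l * (1 - γ) ^ (k - l) else 0)) := by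
        rw [Finset.mul_sum]
        apply Finset.sum_congr rfl
        intro l _
        by_cases h0 : l = 0 <;> simp [h0] <;> ring
      rw [hsplit, Finset.sum_sub_distrib, binom_pmf_sum,
        Finset.sum_ite_eq' (Finset.range (k + 1)) 0]
      simp
    have htail : γ * k / 2 ≤ 1 - (1 - γ) ^ k := by
      have h1 : (1 - γ) ^ k ≤ Real.exp (-γ) ^ k := by
        apply pow_le_pow_left₀ (by linarith)
        linarith [Real.add_one_le_exp (-γ)]
      have h2 : Real.exp (-γ) ^ k = Real.exp (-(γ * k)) := by
        rw [← Real.exp_nat_mul]; ring_nf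
      have h3 : Real.exp (-(γ * k)) ≤ 1 / (1 + γ * k) := by
        rw [Real.exp_neg, inv_eq_one_div]
        apply one_div_le_one_div_of_le (by positivity)
        linarith [Real.add_one_le_exp (γ * k)]
      have hγk : 0 < γ * k := by
        have : (1:ℝ) ≤ (k:ℝ) := by exact_mod_cast hk
        positivity
      have h4 : 1 / (1 + γ * k) ≤ 1 - γ * k / 2 := by
        rw [div_le_iff₀ (by linarith)]
        nlinarith
      nlinarith [h1, h2.le, h3, h4]
    calc (1 / 4) * (γ * k) * c = (1 / 2) * c * (γ * k / 2) := by ring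
      _ ≤ (1 / 2) * c * (1 - (1 - γ) ^ k) := by
          apply mul_le_mul_of_nonneg_left htail (by positivity)
      _ = _ := hsum.symm
      _ ≤ _ := Finset.sum_le_sum hstep
  · -- upper bound
    have hstep : ∀ l ∈ Finset.range (k + 1),
        (Nat.choose k l : ℝ) * γ ^ l * (1 - γ) ^ (k - l) *
          ((1 / 2) * Real.log (1 + (l : ℝ) * x)) ≤
        ((1 / 2) * c) * ((l : ℝ) * ((Nat.choose k l : ℝ) * γ ^ l * (1 - γ) ^ (k - l))) := by
      intro l _
      have hlog : Real.log (1 + (l : ℝ) * x) ≤ l * c := by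
        have h1 : 1 + (l : ℝ) * x ≤ (1 + x) ^ l := by
          have := one_add_mul_le_pow (a := x) (by linarith) l
          linarith
        calc Real.log (1 + (l : ℝ) * x) ≤ Real.log ((1 + x) ^ l) :=
              Real.log_le_log (by positivity) h1
          _ = l * c := by rw [Real.log_pow]
      calc (Nat.choose k l : ℝ) * γ ^ l * (1 - γ) ^ (k - l) *
            ((1 / 2) * Real.log (1 + (l : ℝ) * x))
          ≤ (Nat.choose k l : ℝ) * γ ^ l * (1 - γ) ^ (k - l) * ((1 / 2) * (l * c)) := by
            apply mul_le_mul_of_nonneg_left _ (hp l)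
            apply mul_le_mul_of_nonneg_left hlog (by norm_num)
        _ = ((1 / 2) * c) * ((l : ℝ) * ((Nat.choose k l : ℝ) * γ ^ l * (1 - γ) ^ (k - l))) := by
            ring
    calc _ ≤ ∑ l ∈ Finset.range (k + 1),
          ((1 / 2) * c) * ((l : ℝ) * ((Nat.choose k l : ℝ) * γ ^ l * (1 - γ) ^ (k - l))) :=
        Finset.sum_le_sum hstep
      _ = ((1 / 2) * c) * (k * γ) := by rw [← Finset.mul_sum, binom_mean]
      _ = (1 / 2) * (γ * k) * c := by ring
end
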